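/- Under the list-experiment model with misreporting (Assumptions 1 and 2) with equal misreporting probabilities p₀ = p₁ = p, and with the control group additionally answering the sensitive question directly with reporting errors q₁, q₀ ∈ [0,1] (so that the observed probability of an affirmative direct answer is Pr(X=1) = (1−q₁)·δ + q₀·(1−δ)), the validation condition Pr(X=1) = E(Y₁) − E(Y₀) holds if and only if (1−q₁)·δ + q₀·(1−δ) = δ + p·(1−2δ)/2, where E(Y₀) = ∑_{j=0}^{J} j·P₀(j) and E(Y₁) = ∑_{j=0}^{J+1} j·P₁(j). (Corollary 2.) -/

import Mathlib

/-!
Both observed distributions are mixtures, with weights `1 - p` and `p`, of a latent distribution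
and a uniform distribution, so each observed mean is `(1 - p)` times a latent mean plus `p` times
the midpoint of the answer range. The latent treatment mean exceeds the latent control mean by
exactly `δ`, since the treatment distribution shifts mass `δ` up by one; the uniform midpoints
`(J + 1) / 2` and `J / 2` differ by `1 / 2`. Hence `E(Y₁) - E(Y₀) = (1 - p) δ + p / 2`.
-/

open Finset

namespace Finset

variable {α M : Type*} [AddCommMonoid M]

theorem sum_Icc_add' [AddCommMonoid α] [PartialOrder α] [IsOrderedCancelAddMonoid α]
    [ExistsAddOfLE α] [LocallyFiniteOrder α] (f : α → M) (a b c : α) :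
    ∑ x ∈ Icc a b, f (x + c) = ∑ x ∈ Icc (a + c) (b + c), f x := by
  rw [← map_add_right_Icc, sum_map]
  rfl

theorem sum_Icc_add_one_top [LinearOrder α] [One α] [Add α] [LocallyFiniteOrder α]
    [SuccAddOrder α] [NoMaxOrder α] {a b : α} (h : a ≤ b + 1) (f : α → M) :
    ∑ x ∈ Icc a (b + 1), f x = ∑ x ∈ Icc a b, f x + f (b + 1) := by
  rw [← insert_Icc_right_eq_Icc_add_one h, sum_insert (by simp), add_comm]

end Finset

theorem sum_Icc_zero_intCast (n : ℕ) : ∑ j ∈ Icc (0 : ℤ) n, (j : ℝ) = n * (n + 1) / 2 := by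
  induction n with
  | zero => simp
  | succ n ih =>
    rw [Nat.cast_succ, sum_Icc_add_one_top (by positivity), ih]
    push_cast
    ring

theorem sum_Icc_mul_eq_of_mix_uniform (n : ℕ) (p : ℝ) (Q R : ℤ → ℝ)
    (hR : ∀ j : ℤ, 0 ≤ j → j ≤ n → R j = (1 - p) * Q j + p / ((n : ℝ) + 1)) :
    ∑ j ∈ Icc (0 : ℤ) n, (j : ℝ) * R j =
      (1 - p) * ∑ j ∈ Icc (0 : ℤ) n, (j : ℝ) * Q j + p * n / 2 := by
  have hterm : ∀ j ∈ Icc (0 : ℤ) n,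
      (j : ℝ) * R j = (1 - p) * ((j : ℝ) * Q j) + p / ((n : ℝ) + 1) * j := by
    intro j hj
    rw [mem_Icc] at hj
    rw [hR j hj.1 hj.2]
    ring
  rw [sum_congr rfl hterm, sum_add_distrib, ← mul_sum, ← mul_sum, sum_Icc_zero_intCast]
  field_simp

theorem sum_Icc_mul_sub_one (P : ℤ → ℝ) {n : ℤ} (hn : -1 ≤ n) :
    ∑ j ∈ Icc 0 (n + 1), (j : ℝ) * P (j - 1) =
      ∑ j ∈ Icc 0 n, (j : ℝ) * P j + ∑ j ∈ Icc 0 n, P j := by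
  rw [← insert_Icc_add_one_left_eq_Icc (by omega : (0 : ℤ) ≤ n + 1), sum_insert (by simp),
    ← sum_Icc_add' (fun j : ℤ ↦ (j : ℝ) * P (j - 1)), ← sum_add_distrib]
  simp only [Int.cast_zero, zero_mul, zero_add, add_sub_cancel_right, Int.cast_add, Int.cast_one,
    add_mul, one_mul]

theorem sum_Icc_mul_shift_mix (P : ℤ → ℝ) (δ : ℝ) {n : ℤ} (hn : 0 ≤ n)
    (htop : P (n + 1) = 0) (hsum : ∑ j ∈ Icc 0 n, P j = 1) :
    ∑ j ∈ Icc 0 (n + 1), (j : ℝ) * (δ * P (j - 1) + (1 - δ) * P j) =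
      ∑ j ∈ Icc 0 n, (j : ℝ) * P j + δ := by
  have hshift := sum_Icc_mul_sub_one P (n := n) (by omega)
  have hstay : ∑ j ∈ Icc 0 (n + 1), (j : ℝ) * P j = ∑ j ∈ Icc 0 n, (j : ℝ) * P j := by
    rw [sum_Icc_add_one_top (by omega), htop, mul_zero, add_zero]
  simp only [mul_add, mul_left_comm _ δ, mul_left_comm _ (1 - δ)]
  rw [sum_add_distrib, ← mul_sum, ← mul_sum, hshift, hstay, hsum]
  ring

theorem list_experiment_modified_validation_condition_general
    (J : ℕ)
    (P : ℤ → ℝ)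
    (hPzero : ∀ j : ℤ, j < 0 ∨ (J : ℤ) < j → P j = 0)
    (hPsum : ∑ j ∈ Finset.Icc (0 : ℤ) (J : ℤ), P j = 1)
    (δ p : ℝ)
    (q₁ q₀ : ℝ)
    (PrX1 : ℝ) (hPrX1 : PrX1 = (1 - q₁) * δ + q₀ * (1 - δ))
    (P₀ P₁ : ℤ → ℝ)
    (hP₀ : ∀ j : ℤ, 0 ≤ j → j ≤ (J : ℤ) →
      P₀ j = (1 - p) * P j + p / ((J : ℝ) + 1))
    (hP₁ : ∀ j : ℤ, 0 ≤ j → j ≤ (J : ℤ) + 1 →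
      P₁ j = (1 - p) * (δ * P (j - 1) + (1 - δ) * P j) + p / ((J : ℝ) + 2)) :
    (PrX1 =
        (∑ j ∈ Finset.Icc (0 : ℤ) ((J : ℤ) + 1), (j : ℝ) * P₁ j) -
          (∑ j ∈ Finset.Icc (0 : ℤ) (J : ℤ), (j : ℝ) * P₀ j)) ↔
      (1 - q₁) * δ + q₀ * (1 - δ) = δ + p * (1 - 2 * δ) / 2 := by
  have hcontrol := sum_Icc_mul_eq_of_mix_uniform J p P P₀ hP₀
  have htreatment := sum_Icc_mul_eq_of_mix_uniform (J + 1) p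
    (fun j ↦ δ * P (j - 1) + (1 - δ) * P j) P₁ fun j hj₀ hj₁ ↦ by
    rw [hP₁ j hj₀ (by exact_mod_cast hj₁), Nat.cast_succ, add_assoc, one_add_one_eq_two]
  have hshift := sum_Icc_mul_shift_mix P δ (Int.natCast_nonneg J)
    (hPzero _ (Or.inr (lt_add_one _))) hPsum
  push_cast at htreatment
  have hdiff : (∑ j ∈ Icc (0 : ℤ) ((J : ℤ) + 1), (j : ℝ) * P₁ j) -
      (∑ j ∈ Icc (0 : ℤ) (J : ℤ), (j : ℝ) * P₀ j) = δ + p * (1 - 2 * δ) / 2 := by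
    rw [htreatment, hshift, hcontrol]
    ring
  rw [hPrX1, hdiff]

/-- Corollary 2: with equal list-experiment misreporting probability `p` and direct-question
reporting errors `q₁, q₀ ∈ [0,1]`, the validation condition `Pr(X=1) = E(Y₁) − E(Y₀)` holds
iff `(1−q₁)·δ + q₀·(1−δ) = δ + p·(1−2δ)/2`. -/
theorem list_experiment_modified_validation_condition
    (J : ℕ) (hJ : 1 ≤ J)
    (P : ℤ → ℝ)
    (hPzero : ∀ j : ℤ, j < 0 ∨ (J : ℤ) < j → P j = 0)
    (hPnonneg : ∀ j : ℤ, 0 ≤ P j)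
    (hPsum : ∑ j ∈ Finset.Icc (0 : ℤ) (J : ℤ), P j = 1)
    (δ p : ℝ)
    (hδ : 0 ≤ δ ∧ δ ≤ 1) (hp : 0 ≤ p ∧ p < 1)
    (q₁ q₀ : ℝ) (hq₁ : 0 ≤ q₁ ∧ q₁ ≤ 1) (hq₀ : 0 ≤ q₀ ∧ q₀ ≤ 1)
    (PrX1 : ℝ) (hPrX1 : PrX1 = (1 - q₁) * δ + q₀ * (1 - δ))
    (P₀ P₁ : ℤ → ℝ)
    (hP₀ : ∀ j : ℤ, 0 ≤ j → j ≤ (J : ℤ) →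
      P₀ j = (1 - p) * P j + p / ((J : ℝ) + 1))
    (hP₁ : ∀ j : ℤ, 0 ≤ j → j ≤ (J : ℤ) + 1 →
      P₁ j = (1 - p) * (δ * P (j - 1) + (1 - δ) * P j) + p / ((J : ℝ) + 2)) :
    (PrX1 =
        (∑ j ∈ Finset.Icc (0 : ℤ) ((J : ℤ) + 1), (j : ℝ) * P₁ j) -
          (∑ j ∈ Finset.Icc (0 : ℤ) (J : ℤ), (j : ℝ) * P₀ j)) ↔
      (1 - q₁) * δ + q₀ * (1 - δ) = δ + p * (1 - 2 * δ) / 2 :=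
  list_experiment_modified_validation_condition_general J P hPzero hPsum δ p q₁ q₀ PrX1 hPrX1 P₀ P₁
    hP₀ hP₁
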